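/- arXiv:1812.09185 — 2 statements merged into one kernel-verified Lean document; each statement's English description precedes it below -/
import Mathlib

section
/- Let v, ψ : [0,∞) × (0,∞) → ℝ be smooth functions such that for each z the functions v(·,z), ψ(·,z) have compact support in y, satisfying the boundary conditions v(0,z) = ψ(0,z) = ∂_y ψ(0,z) = 0 for all z > 0, and solving pointwise the homogeneous system ∂_z v + z ∂_y v − (1/2)∂_y⁴ψ = 0 and ∂_z ψ + z ∂_y ψ + (1/2)∂_y²v = 0. Then the function 𝓔(z) = ∫₀^∞ v(y,z) ψ(y,z) dy is differentiable on (0,∞) with 𝓔'(z) = (1/2) ∫₀^∞ ( |∂_y²ψ(y,z)|² + |∂_y v(y,z)|² ) dy ≥ 0 for every z > 0. -/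
open MeasureTheory Set

noncomputable section

/-- within-derivative on `Ici 0` -/
def dW (f : ℝ → ℝ) : ℝ → ℝ := derivWithin f (Ici 0)

lemma contDiffOn_dW {f : ℝ → ℝ} (hf : ContDiffOn ℝ (⊤ : ℕ∞) f (Ici 0)) :
    ContDiffOn ℝ (⊤ : ℕ∞) (dW f) (Ici 0) :=
  hf.derivWithin (uniqueDiffOn_Ici 0) (by simp)

lemma dW_vanish {f : ℝ → ℝ} {R : ℝ} (hR0 : 0 ≤ R) (h : ∀ y, R < y → f y = 0) :
    ∀ y, R < y → dW f y = 0 := by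
  intro y hy
  have hmem : Ici (0:ℝ) ∈ nhds y := Ici_mem_nhds (lt_of_le_of_lt hR0 hy)
  rw [dW, derivWithin_of_mem_nhds hmem]
  have hEq : f =ᶠ[nhds y] fun _ => (0:ℝ) := by
    filter_upwards [isOpen_Ioi.mem_nhds hy] with t ht using h t ht
  rw [hEq.deriv_eq]; simp

lemma deriv_eq_dW_on {f g : ℝ → ℝ} (hfg : ∀ y, 0 < y → f y = g y) {y : ℝ} (hy : 0 < y) :
    deriv f y = dW g y := by
  have h1 : f =ᶠ[nhds y] g := by
    filter_upwards [isOpen_Ioi.mem_nhds hy] with t ht using hfg t ht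
  rw [h1.deriv_eq, dW, derivWithin_of_mem_nhds (Ici_mem_nhds hy)]

lemma hasDerivAt_dW {f : ℝ → ℝ} (hf : ContDiffOn ℝ (⊤ : ℕ∞) f (Ici 0)) {y : ℝ} (hy : 0 < y) :
    HasDerivAt f (dW f y) y := by
  have hmem : Ici (0:ℝ) ∈ nhds y := Ici_mem_nhds hy
  have hd : DifferentiableAt ℝ f y :=
    ((hf.differentiableOn (by simp)) y (le_of_lt hy)).differentiableAt hmem
  have : dW f y = deriv f y := derivWithin_of_mem_nhds hmem
  rw [this]
  exact hd.hasDerivAt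

lemma integrableOn_of_vanish {h : ℝ → ℝ} {R : ℝ}
    (hc : ContinuousOn h (Ici 0)) (hR : ∀ y, R ≤ y → h y = 0) :
    IntegrableOn h (Ioi 0) := by
  have h1 : IntegrableOn h (Ioc 0 R) :=
    ((hc.mono Icc_subset_Ici_self).integrableOn_Icc).mono_set Ioc_subset_Icc_self
  have h2 : IntegrableOn h (Ioi R) := by
    exact (integrableOn_congr_fun (fun y (hy : y ∈ Ioi R) => hR y (le_of_lt hy))
      measurableSet_Ioi).mpr integrableOn_zero
  exact ((h1.union h2).mono_set (fun y hy => by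
    rcases le_or_gt y R with h | h
    · exact Or.inl ⟨hy, h⟩
    · exact Or.inr h))

lemma ftc_Ioi {G G' : ℝ → ℝ} {R : ℝ}
    (hc : ContinuousWithinAt G (Ici 0) 0)
    (hd : ∀ y ∈ Ioi (0:ℝ), HasDerivAt G (G' y) y)
    (hint : IntegrableOn G' (Ioi 0))
    (hR : ∀ y, R ≤ y → G y = 0) :
    ∫ y in Ioi (0:ℝ), G' y = - G 0 := by
  have ht : Filter.Tendsto G Filter.atTop (nhds 0) := by
    apply Filter.Tendsto.congr' _ tendsto_const_nhds
    filter_upwards [Filter.eventually_ge_atTop R] with y hy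
    exact (hR y hy).symm
  simpa using integral_Ioi_of_hasDerivAt_of_tendsto hc hd hint ht

lemma ibp_pair {p q : ℝ → ℝ} {R : ℝ} (hR0 : 0 ≤ R)
    (hp : ContDiffOn ℝ (⊤ : ℕ∞) p (Ici 0)) (hq : ContDiffOn ℝ (⊤ : ℕ∞) q (Ici 0))
    (hpR : ∀ y, R < y → p y = 0) (hqR : ∀ y, R < y → q y = 0) :
    ∫ y in Ioi (0:ℝ), (dW p y * q y + p y * dW q y) = - (p 0 * q 0) := by
  have hint : IntegrableOn (fun y => dW p y * q y + p y * dW q y) (Ioi 0) := by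
    apply integrableOn_of_vanish (R := R + 1)
      (((contDiffOn_dW hp).continuousOn.mul hq.continuousOn).add
        (hp.continuousOn.mul (contDiffOn_dW hq).continuousOn))
    intro y hy
    have hy' : R < y := by linarith
    show dW p y * q y + p y * dW q y = 0
    rw [hpR y hy', hqR y hy', dW_vanish hR0 hpR y hy', dW_vanish hR0 hqR y hy']
    ring
  have hc : ContinuousWithinAt (fun y => p y * q y) (Ici 0) 0 :=
    (hp.continuousOn.mul hq.continuousOn) 0 self_mem_Ici
  have hd : ∀ y ∈ Ioi (0:ℝ), HasDerivAt (fun y => p y * q y)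
      (dW p y * q y + p y * dW q y) y := fun y hy =>
    (hasDerivAt_dW hp hy).mul (hasDerivAt_dW hq hy)
  exact ftc_Ioi hc hd hint (fun y hy => by
    rw [hpR y (by linarith : R < y)]; ring) (R := R + 1)


/-- Partial derivative in `y` of a function of `(y,z)`. -/
def dy (f : ℝ → ℝ → ℝ) (y z : ℝ) : ℝ := deriv (fun t => f t z) y

/-- Second partial derivative in `y`. -/
def dyy (f : ℝ → ℝ → ℝ) : ℝ → ℝ → ℝ := dy (dy f)

/-- Iterated partial derivatives in `y`. -/
def dy3 (f : ℝ → ℝ → ℝ) : ℝ → ℝ → ℝ := dy (dyy f)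
def dy4 (f : ℝ → ℝ → ℝ) : ℝ → ℝ → ℝ := dy (dy3 f)

/-- Partial derivative in `z`. -/
def dz (f : ℝ → ℝ → ℝ) (y z : ℝ) : ℝ := deriv (fun t => f y t) z

lemma slice_smooth {u : ℝ → ℝ → ℝ}
    (hu : ContDiffOn ℝ (⊤ : ℕ∞) (fun p : ℝ × ℝ => u p.1 p.2) (Ici 0 ×ˢ Ioi 0)) {z : ℝ} (hz : 0 < z) :
    ContDiffOn ℝ (⊤ : ℕ∞) (fun y => u y z) (Ici 0) :=
  hu.comp ((contDiff_id.prodMk contDiff_const).contDiffOn) (fun y hy => ⟨hy, hz⟩)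

lemma energy_identity (v ψ : ℝ → ℝ → ℝ)
    (hv : ContDiffOn ℝ (⊤ : ℕ∞) (fun p : ℝ × ℝ => v p.1 p.2) (Ici 0 ×ˢ Ioi 0))
    (hψ : ContDiffOn ℝ (⊤ : ℕ∞) (fun p : ℝ × ℝ => ψ p.1 p.2) (Ici 0 ×ˢ Ioi 0))
    (hbc_v : ∀ z : ℝ, 0 < z → v 0 z = 0)
    (hbc_ψ : ∀ z : ℝ, 0 < z → ψ 0 z = 0)
    (hbc_dψ : ∀ z : ℝ, 0 < z → derivWithin (fun y => ψ y z) (Ici 0) 0 = 0)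
    (heq₁ : ∀ y z : ℝ, 0 < y → 0 < z →
      dz v y z + z * dy v y z - (1 / 2) * dy4 ψ y z = 0)
    (heq₂ : ∀ y z : ℝ, 0 < y → 0 < z →
      dz ψ y z + z * dy ψ y z + (1 / 2) * dyy v y z = 0)
    (z : ℝ) (hz : 0 < z) (R : ℝ) (hR0 : 0 ≤ R)
    (hRv : ∀ y, R ≤ y → v y z = 0) (hRψ : ∀ y, R ≤ y → ψ y z = 0) :
    ∫ y in Ioi (0:ℝ), (dz v y z * ψ y z + v y z * dz ψ y z)
      = (1 / 2) * ∫ y in Ioi (0:ℝ), ((dyy ψ y z) ^ 2 + (dy v y z) ^ 2) := by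
  set f : ℝ → ℝ := fun y => v y z with hf_def
  set g : ℝ → ℝ := fun y => ψ y z with hg_def
  set f1 := dW f with hf1_def
  set f2 := dW f1 with hf2_def
  set g1 := dW g with hg1_def
  set g2 := dW g1 with hg2_def
  set g3 := dW g2 with hg3_def
  set g4 := dW g3 with hg4_def
  have hf : ContDiffOn ℝ (⊤ : ℕ∞) f (Ici 0) := slice_smooth hv hz
  have hg : ContDiffOn ℝ (⊤ : ℕ∞) g (Ici 0) := slice_smooth hψ hz
  have hf1 : ContDiffOn ℝ (⊤ : ℕ∞) f1 (Ici 0) := contDiffOn_dW hf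
  have hf2 : ContDiffOn ℝ (⊤ : ℕ∞) f2 (Ici 0) := contDiffOn_dW hf1
  have hg1 : ContDiffOn ℝ (⊤ : ℕ∞) g1 (Ici 0) := contDiffOn_dW hg
  have hg2 : ContDiffOn ℝ (⊤ : ℕ∞) g2 (Ici 0) := contDiffOn_dW hg1
  have hg3 : ContDiffOn ℝ (⊤ : ℕ∞) g3 (Ici 0) := contDiffOn_dW hg2
  have hg4 : ContDiffOn ℝ (⊤ : ℕ∞) g4 (Ici 0) := contDiffOn_dW hg3
  have vf : ∀ y, R < y → f y = 0 := fun y hy => hRv y hy.le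
  have vg : ∀ y, R < y → g y = 0 := fun y hy => hRψ y hy.le
  have vf1 : ∀ y, R < y → f1 y = 0 := dW_vanish hR0 vf
  have vf2 : ∀ y, R < y → f2 y = 0 := dW_vanish hR0 vf1
  have vg1 : ∀ y, R < y → g1 y = 0 := dW_vanish hR0 vg
  have vg2 : ∀ y, R < y → g2 y = 0 := dW_vanish hR0 vg1
  have vg3 : ∀ y, R < y → g3 y = 0 := dW_vanish hR0 vg2
  have vg4 : ∀ y, R < y → g4 y = 0 := dW_vanish hR0 vg3
  -- conversions between full and within derivatives
  have cf1 : ∀ y, 0 < y → dy v y z = f1 y := fun y hy =>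
    deriv_eq_dW_on (fun _ _ => rfl) hy
  have cf2 : ∀ y, 0 < y → dyy v y z = f2 y := fun y hy =>
    deriv_eq_dW_on cf1 hy
  have cg1 : ∀ y, 0 < y → dy ψ y z = g1 y := fun y hy =>
    deriv_eq_dW_on (fun _ _ => rfl) hy
  have cg2 : ∀ y, 0 < y → dyy ψ y z = g2 y := fun y hy =>
    deriv_eq_dW_on cg1 hy
  have cg3 : ∀ y, 0 < y → dy3 ψ y z = g3 y := fun y hy =>
    deriv_eq_dW_on cg2 hy
  have cg4 : ∀ y, 0 < y → dy4 ψ y z = g4 y := fun y hy =>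
    deriv_eq_dW_on cg3 hy
  -- boundary values
  have bf : f 0 = 0 := hbc_v z hz
  have bg : g 0 = 0 := hbc_ψ z hz
  have bg1 : g1 0 = 0 := hbc_dψ z hz
  -- integrability of products
  have van : ∀ h : ℝ → ℝ, ContinuousOn h (Ici 0) → (∀ y, R < y → h y = 0) →
      IntegrableOn h (Ioi 0) := fun h hc hv =>
    integrableOn_of_vanish (R := R + 1) hc (fun y hy => hv y (by linarith))
  have i1a : IntegrableOn (fun y => f1 y * g y) (Ioi 0) :=
    van _ (hf1.continuousOn.mul hg.continuousOn) (fun y hy => by simp [vf1 y hy])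
  have i1b : IntegrableOn (fun y => f y * g1 y) (Ioi 0) :=
    van _ (hf.continuousOn.mul hg1.continuousOn) (fun y hy => by simp [vf y hy])
  have i2 : IntegrableOn (fun y => g4 y * g y) (Ioi 0) :=
    van _ (hg4.continuousOn.mul hg.continuousOn) (fun y hy => by simp [vg4 y hy])
  have i3 : IntegrableOn (fun y => f y * f2 y) (Ioi 0) :=
    van _ (hf.continuousOn.mul hf2.continuousOn) (fun y hy => by simp [vf y hy])
  have i4 : IntegrableOn (fun y => g3 y * g1 y) (Ioi 0) :=
    van _ (hg3.continuousOn.mul hg1.continuousOn) (fun y hy => by simp [vg3 y hy])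
  have i5 : IntegrableOn (fun y => g2 y * g2 y) (Ioi 0) :=
    van _ (hg2.continuousOn.mul hg2.continuousOn) (fun y hy => by simp [vg2 y hy])
  have i6 : IntegrableOn (fun y => f1 y * f1 y) (Ioi 0) :=
    van _ (hf1.continuousOn.mul hf1.continuousOn) (fun y hy => by simp [vf1 y hy])
  have j1 : IntegrableOn (fun y => (-z) * (f1 y * g y + f y * g1 y)) (Ioi 0) :=
    van _ (continuousOn_const.mul ((hf1.continuousOn.mul hg.continuousOn).add
      (hf.continuousOn.mul hg1.continuousOn)))
      (fun y hy => by simp [vf1 y hy, vf y hy])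
  have j2a : IntegrableOn (fun y => (1/2 : ℝ) * (g4 y * g y)) (Ioi 0) :=
    van _ (continuousOn_const.mul (hg4.continuousOn.mul hg.continuousOn))
      (fun y hy => by simp [vg4 y hy])
  have j2b : IntegrableOn (fun y => (-(1/2) : ℝ) * (f y * f2 y)) (Ioi 0) :=
    van _ (continuousOn_const.mul (hf.continuousOn.mul hf2.continuousOn))
      (fun y hy => by simp [vf y hy])
  have j2 : IntegrableOn (fun y => (1/2 : ℝ) * (g4 y * g y) + (-(1/2) : ℝ) * (f y * f2 y)) (Ioi 0) :=
    van _ ((continuousOn_const.mul (hg4.continuousOn.mul hg.continuousOn)).add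
        (continuousOn_const.mul (hf.continuousOn.mul hf2.continuousOn)))
      (fun y hy => by simp [vg4 y hy, vf y hy])
  -- the integration-by-parts identities
  have P1 : ∫ y in Ioi (0:ℝ), (f1 y * g y + f y * g1 y) = 0 := by
    have h := ibp_pair (p := f) (q := g) hR0 hf hg vf vg
    rw [bf, zero_mul, neg_zero] at h
    exact h
  have P2 : ∫ y in Ioi (0:ℝ), (g4 y * g y + g3 y * g1 y) = 0 := by
    have h := ibp_pair (p := g3) (q := g) hR0 hg3 hg vg3 vg
    rw [bg, mul_zero, neg_zero] at h
    exact h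
  have P3 : ∫ y in Ioi (0:ℝ), (g3 y * g1 y + g2 y * g2 y) = 0 := by
    have h := ibp_pair (p := g2) (q := g1) hR0 hg2 hg1 vg2 vg1
    rw [bg1, mul_zero, neg_zero] at h
    exact h
  have P4 : ∫ y in Ioi (0:ℝ), (f1 y * f1 y + f y * f2 y) = 0 := by
    have h := ibp_pair (p := f) (q := f1) hR0 hf hf1 vf vf1
    rw [bf, zero_mul, neg_zero] at h
    exact h
  have A2 : ∫ y in Ioi (0:ℝ), (g4 y * g y + g3 y * g1 y)
      = (∫ y in Ioi (0:ℝ), g4 y * g y) + ∫ y in Ioi (0:ℝ), g3 y * g1 y := integral_add i2 i4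
  have A3 : ∫ y in Ioi (0:ℝ), (g3 y * g1 y + g2 y * g2 y)
      = (∫ y in Ioi (0:ℝ), g3 y * g1 y) + ∫ y in Ioi (0:ℝ), g2 y * g2 y := integral_add i4 i5
  have A4 : ∫ y in Ioi (0:ℝ), (f1 y * f1 y + f y * f2 y)
      = (∫ y in Ioi (0:ℝ), f1 y * f1 y) + ∫ y in Ioi (0:ℝ), f y * f2 y := integral_add i6 i3
  have S2 : ∫ y in Ioi (0:ℝ), g4 y * g y = - ∫ y in Ioi (0:ℝ), g3 y * g1 y := by
    rw [A2] at P2; linarith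
  have S3 : ∫ y in Ioi (0:ℝ), g3 y * g1 y = - ∫ y in Ioi (0:ℝ), g2 y * g2 y := by
    rw [A3] at P3; linarith
  have S4 : ∫ y in Ioi (0:ℝ), f y * f2 y = - ∫ y in Ioi (0:ℝ), f1 y * f1 y := by
    rw [A4] at P4; linarith
  -- rewrite the left-hand side
  have LHS1 : ∫ y in Ioi (0:ℝ), (dz v y z * ψ y z + v y z * dz ψ y z)
      = ∫ y in Ioi (0:ℝ), ((-z) * (f1 y * g y + f y * g1 y)
          + ((1/2 : ℝ) * (g4 y * g y) + (-(1/2) : ℝ) * (f y * f2 y))) := by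
    apply setIntegral_congr_fun measurableSet_Ioi
    intro y hy
    have hy' : (0:ℝ) < y := hy
    have e1 : dz v y z = (1/2) * g4 y - z * f1 y := by
      have h := heq₁ y z hy' hz
      rw [cf1 y hy', cg4 y hy'] at h; linarith
    have e2 : dz ψ y z = -(z * g1 y) - (1/2) * f2 y := by
      have h := heq₂ y z hy' hz
      rw [cg1 y hy', cf2 y hy'] at h; linarith
    show dz v y z * g y + f y * dz ψ y z
      = (-z) * (f1 y * g y + f y * g1 y) + ((1/2 : ℝ) * (g4 y * g y) + (-(1/2) : ℝ) * (f y * f2 y))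
    rw [e1, e2]; ring
  have T1 : ∫ y in Ioi (0:ℝ), ((-z) * (f1 y * g y + f y * g1 y)
          + ((1/2 : ℝ) * (g4 y * g y) + (-(1/2) : ℝ) * (f y * f2 y)))
      = (∫ y in Ioi (0:ℝ), (-z) * (f1 y * g y + f y * g1 y))
        + ∫ y in Ioi (0:ℝ), ((1/2 : ℝ) * (g4 y * g y) + (-(1/2) : ℝ) * (f y * f2 y)) :=
    integral_add j1 j2
  have T2 : ∫ y in Ioi (0:ℝ), ((1/2 : ℝ) * (g4 y * g y) + (-(1/2) : ℝ) * (f y * f2 y))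
      = (∫ y in Ioi (0:ℝ), (1/2 : ℝ) * (g4 y * g y))
        + ∫ y in Ioi (0:ℝ), (-(1/2) : ℝ) * (f y * f2 y) := integral_add j2a j2b
  have U1 : ∫ y in Ioi (0:ℝ), (-z) * (f1 y * g y + f y * g1 y)
      = (-z) * ∫ y in Ioi (0:ℝ), (f1 y * g y + f y * g1 y) := integral_const_mul _ _
  have U2 : ∫ y in Ioi (0:ℝ), (1/2 : ℝ) * (g4 y * g y)
      = (1/2 : ℝ) * ∫ y in Ioi (0:ℝ), g4 y * g y := integral_const_mul _ _
  have U3 : ∫ y in Ioi (0:ℝ), (-(1/2) : ℝ) * (f y * f2 y)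
      = (-(1/2) : ℝ) * ∫ y in Ioi (0:ℝ), f y * f2 y := integral_const_mul _ _
  have RHS1 : ∫ y in Ioi (0:ℝ), ((dyy ψ y z) ^ 2 + (dy v y z) ^ 2)
      = ∫ y in Ioi (0:ℝ), (g2 y * g2 y + f1 y * f1 y) := by
    apply setIntegral_congr_fun measurableSet_Ioi
    intro y hy
    have hy' : (0:ℝ) < y := hy
    show (dyy ψ y z) ^ 2 + (dy v y z) ^ 2 = g2 y * g2 y + f1 y * f1 y
    rw [cg2 y hy', cf1 y hy']; ring
  have A5 : ∫ y in Ioi (0:ℝ), (g2 y * g2 y + f1 y * f1 y)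
      = (∫ y in Ioi (0:ℝ), g2 y * g2 y) + ∫ y in Ioi (0:ℝ), f1 y * f1 y := integral_add i5 i6
  rw [LHS1, T1, T2, U1, U2, U3, P1, S2, S3, S4, RHS1, A5]
  ring

lemma mem_nhds_S {y Z : ℝ} (hy : 0 < y) (hZ : 0 < Z) :
    (Ici (0:ℝ) ×ˢ Ioi (0:ℝ)) ∈ nhds (y, Z) :=
  Filter.mem_of_superset ((isOpen_Ioi.prod isOpen_Ioi).mem_nhds ⟨hy, hZ⟩)
    (prod_mono Ioi_subset_Ici_self subset_rfl)

/-- the `z`-partial derivative at interior points, as value of `fderivWithin`. -/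
lemma hasDerivAt_dz {u : ℝ → ℝ → ℝ}
    (hu : ContDiffOn ℝ (⊤ : ℕ∞) (fun p : ℝ × ℝ => u p.1 p.2) (Ici 0 ×ˢ Ioi 0))
    {y Z : ℝ} (hy : 0 < y) (hZ : 0 < Z) :
    HasDerivAt (fun t => u y t) (dz u y Z) Z ∧
      dz u y Z = fderivWithin ℝ (fun p : ℝ × ℝ => u p.1 p.2) (Ici 0 ×ˢ Ioi 0) (y, Z) (0, 1) := by
  have hmem := mem_nhds_S hy hZ
  have hd : DifferentiableAt ℝ (fun p : ℝ × ℝ => u p.1 p.2) (y, Z) :=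
    (hu.contDiffAt hmem).differentiableAt (by simp)
  have hc : HasDerivAt (fun t : ℝ => ((y, t) : ℝ × ℝ)) ((0:ℝ), (1:ℝ)) Z :=
    HasDerivAt.prodMk (hasDerivAt_const Z y) (hasDerivAt_id Z)
  have hcomp : HasDerivAt (fun t => u y t)
      (fderiv ℝ (fun p : ℝ × ℝ => u p.1 p.2) (y, Z) (0, 1)) Z :=
    hd.hasFDerivAt.comp_hasDerivAt Z hc
  have hdz : dz u y Z = fderiv ℝ (fun p : ℝ × ℝ => u p.1 p.2) (y, Z) (0, 1) := hcomp.deriv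
  rw [← fderivWithin_of_mem_nhds hmem] at hdz
  refine ⟨?_, hdz⟩
  rw [hdz, fderivWithin_of_mem_nhds hmem]
  exact hcomp

theorem main_deriv (v ψ : ℝ → ℝ → ℝ)
    (hv : ContDiffOn ℝ (⊤ : ℕ∞) (fun p : ℝ × ℝ => v p.1 p.2) (Ici 0 ×ˢ Ioi 0))
    (hψ : ContDiffOn ℝ (⊤ : ℕ∞) (fun p : ℝ × ℝ => ψ p.1 p.2) (Ici 0 ×ˢ Ioi 0))
    (hsupp_unif : ∀ a b : ℝ, 0 < a → a ≤ b → ∃ R : ℝ, ∀ z ∈ Icc a b, ∀ y : ℝ,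
      R ≤ y → v y z = 0 ∧ ψ y z = 0)
    (z₀ : ℝ) (hz₀ : 0 < z₀) :
    HasDerivAt (fun Z : ℝ => ∫ y in Ioi (0:ℝ), v y Z * ψ y Z)
      (∫ y in Ioi (0:ℝ), (dz v y z₀ * ψ y z₀ + v y z₀ * dz ψ y z₀)) z₀ := by
  set S : Set (ℝ × ℝ) := Ici (0:ℝ) ×ˢ Ioi (0:ℝ) with hS_def
  set a : ℝ := z₀ / 2 with ha_def
  set b : ℝ := z₀ + z₀ with hb_def
  have ha : 0 < a := by positivity
  have hab : a ≤ b := by simp only [ha_def, hb_def]; linarith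
  obtain ⟨R₀, hR₀⟩ := hsupp_unif a b ha hab
  set R : ℝ := max R₀ 0 with hR_def
  have hR0 : 0 ≤ R := le_max_right _ _
  have hRv : ∀ z ∈ Icc a b, ∀ y, R ≤ y → v y z = 0 ∧ ψ y z = 0 := by
    intro z hzab y hy
    exact hR₀ z hzab y (le_trans (le_max_left _ _) hy)
  -- ball z₀ (z₀/2) facts
  have hball : ∀ Z ∈ Metric.ball z₀ (z₀ / 2), a < Z ∧ Z < b := by
    intro Z hZ
    rw [Metric.mem_ball, Real.dist_eq, abs_lt] at hZ
    constructor <;> [skip; skip] <;> simp only [ha_def, hb_def] <;> linarith [hZ.1, hZ.2]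
  have hballIcc : ∀ Z ∈ Metric.ball z₀ (z₀ / 2), Z ∈ Icc a b := fun Z hZ =>
    ⟨(hball Z hZ).1.le, (hball Z hZ).2.le⟩
  have hballpos : ∀ Z ∈ Metric.ball z₀ (z₀ / 2), 0 < Z := fun Z hZ =>
    lt_trans ha (hball Z hZ).1
  -- uniqueness of differentiation and continuity of fderivWithin
  have hSuniq : UniqueDiffOn ℝ S := (uniqueDiffOn_Ici 0).prod (uniqueDiffOn_Ioi 0)
  have hDv : ContinuousOn (fderivWithin ℝ (fun p : ℝ × ℝ => v p.1 p.2) S) S :=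
    hv.continuousOn_fderivWithin hSuniq (by simp)
  have hDψ : ContinuousOn (fderivWithin ℝ (fun p : ℝ × ℝ => ψ p.1 p.2) S) S :=
    hψ.continuousOn_fderivWithin hSuniq (by simp)
  -- bounds on the compact set K
  set K : Set (ℝ × ℝ) := Icc (0:ℝ) R ×ˢ Icc a b with hK_def
  have hKco : IsCompact K := isCompact_Icc.prod isCompact_Icc
  have hKS : K ⊆ S := prod_mono (fun x hx => hx.1) (fun x hx => lt_of_lt_of_le ha hx.1)
  obtain ⟨Cv, hCv⟩ := hKco.exists_bound_of_continuousOn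
    ((hv.continuousOn).mono hKS)
  obtain ⟨Cψ, hCψ⟩ := hKco.exists_bound_of_continuousOn
    ((hψ.continuousOn).mono hKS)
  obtain ⟨Cdv, hCdv⟩ := hKco.exists_bound_of_continuousOn (hDv.mono hKS)
  obtain ⟨Cdψ, hCdψ⟩ := hKco.exists_bound_of_continuousOn (hDψ.mono hKS)
  have hKne : ((0:ℝ), a) ∈ K := ⟨⟨le_refl 0, hR0⟩, ⟨le_refl a, hab⟩⟩
  have hCv0 : 0 ≤ Cv := le_trans (norm_nonneg _) (hCv _ hKne)
  have hCψ0 : 0 ≤ Cψ := le_trans (norm_nonneg _) (hCψ _ hKne)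
  have hCdv0 : 0 ≤ Cdv := le_trans (norm_nonneg _) (hCdv _ hKne)
  have hCdψ0 : 0 ≤ Cdψ := le_trans (norm_nonneg _) (hCdψ _ hKne)
  set Cb : ℝ := Cdv * Cψ + Cv * Cdψ with hCb_def
  -- norm of (0,1)
  have hnorm01 : ‖((0:ℝ), (1:ℝ))‖ = 1 := by
    rw [Prod.norm_def]; simp
  -- pointwise bound on dz at interior points of K
  have hdzbound : ∀ (u : ℝ → ℝ → ℝ), ContDiffOn ℝ (⊤ : ℕ∞) (fun p : ℝ × ℝ => u p.1 p.2) S →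
      ∀ C, (∀ p ∈ K, ‖fderivWithin ℝ (fun p : ℝ × ℝ => u p.1 p.2) S p‖ ≤ C) →
      ∀ y Z, 0 < y → y ≤ R → Z ∈ Metric.ball z₀ (z₀ / 2) → |dz u y Z| ≤ C := by
    intro u hu C hC y Z hy hyR hZ
    have hZ0 := hballpos Z hZ
    have h2 := (hasDerivAt_dz hu hy hZ0).2
    have hKmem : ((y, Z) : ℝ × ℝ) ∈ K := ⟨⟨hy.le, hyR⟩, hballIcc Z hZ⟩
    rw [h2, ← Real.norm_eq_abs]
    calc ‖fderivWithin ℝ (fun p : ℝ × ℝ => u p.1 p.2) S (y, Z) (0, 1)‖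
        ≤ ‖fderivWithin ℝ (fun p : ℝ × ℝ => u p.1 p.2) S (y, Z)‖ * ‖((0:ℝ), (1:ℝ))‖ :=
          ContinuousLinearMap.le_opNorm _ _
      _ ≤ C := by rw [hnorm01, mul_one]; exact hC _ hKmem
  -- dz vanishes for y > R
  have hdz_zero : ∀ (u : ℝ → ℝ → ℝ), (∀ z ∈ Icc a b, ∀ y, R ≤ y → u y z = 0) →
      ∀ y Z, R < y → Z ∈ Metric.ball z₀ (z₀ / 2) → dz u y Z = 0 := by
    intro u hu y Z hy hZ
    have hev : (fun t => u y t) =ᶠ[nhds Z] fun _ => (0:ℝ) := by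
      filter_upwards [isOpen_Ioo.mem_nhds (⟨(hball Z hZ).1, (hball Z hZ).2⟩ : Z ∈ Ioo a b)]
        with t ht
      exact hu t ⟨ht.1.le, ht.2.le⟩ y hy.le
    rw [dz, hev.deriv_eq, deriv_const]
  -- set up for differentiation under the integral
  set F : ℝ → ℝ → ℝ := fun Z y => v y Z * ψ y Z with hF_def
  set F' : ℝ → ℝ → ℝ := fun Z y => dz v y Z * ψ y Z + v y Z * dz ψ y Z with hF'_def
  set bound : ℝ → ℝ := (Icc (0:ℝ) R).indicator (fun _ => Cb) with hbound_def
  have hεpos : 0 < z₀ / 2 := by positivity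
  have hz₀Icc : z₀ ∈ Icc a b := ⟨by simp only [ha_def]; linarith, by simp only [hb_def]; linarith⟩
  have hF_meas : ∀ᶠ Z in nhds z₀, AEStronglyMeasurable (F Z) (volume.restrict (Ioi 0)) := by
    filter_upwards [isOpen_Ioi.mem_nhds hz₀] with Z hZ
    exact ((((slice_smooth hv hZ).continuousOn.mul
      (slice_smooth hψ hZ).continuousOn)).mono
      (fun y (hy : y ∈ Ioi (0:ℝ)) => mem_Ici.mpr (le_of_lt hy))).aestronglyMeasurable measurableSet_Ioi
  have hF_int : Integrable (F z₀) (volume.restrict (Ioi 0)) := by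
    apply integrableOn_of_vanish (R := R)
      ((slice_smooth hv hz₀).continuousOn.mul (slice_smooth hψ hz₀).continuousOn)
    intro y hy
    have := hRv z₀ hz₀Icc y hy
    simp only [hF_def, Pi.mul_apply, this.1, this.2, zero_mul]
  have hcurve : ContinuousOn (fun y : ℝ => ((y, z₀) : ℝ × ℝ)) (Ioi 0) :=
    (continuous_id.prodMk continuous_const).continuousOn
  have hmapsto : MapsTo (fun y : ℝ => ((y, z₀) : ℝ × ℝ)) (Ioi 0) S :=
    fun y hy => ⟨mem_Ici.mpr (le_of_lt hy), hz₀⟩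
  have hF'_cont : ContinuousOn (F' z₀) (Ioi 0) := by
    have h1 : ContinuousOn (fun y : ℝ =>
        fderivWithin ℝ (fun p : ℝ × ℝ => v p.1 p.2) S (y, z₀) ((0:ℝ), (1:ℝ))) (Ioi 0) :=
      (hDv.comp hcurve hmapsto).clm_apply continuousOn_const
    have h2 : ContinuousOn (fun y : ℝ =>
        fderivWithin ℝ (fun p : ℝ × ℝ => ψ p.1 p.2) S (y, z₀) ((0:ℝ), (1:ℝ))) (Ioi 0) :=
      (hDψ.comp hcurve hmapsto).clm_apply continuousOn_const
    have hvs : ContinuousOn (fun y => v y z₀) (Ioi 0) :=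
      (slice_smooth hv hz₀).continuousOn.mono (fun y (hy : y ∈ Ioi (0:ℝ)) => mem_Ici.mpr (le_of_lt hy))
    have hψs : ContinuousOn (fun y => ψ y z₀) (Ioi 0) :=
      (slice_smooth hψ hz₀).continuousOn.mono (fun y (hy : y ∈ Ioi (0:ℝ)) => mem_Ici.mpr (le_of_lt hy))
    apply ContinuousOn.congr ((h1.mul hψs).add (hvs.mul h2))
    intro y hy
    simp only [hF'_def]
    rw [(hasDerivAt_dz hv hy hz₀).2, (hasDerivAt_dz hψ hy hz₀).2]
    rfl
  have hF'_meas : AEStronglyMeasurable (F' z₀) (volume.restrict (Ioi 0)) :=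
    hF'_cont.aestronglyMeasurable measurableSet_Ioi
  have h_bound : ∀ᵐ y ∂(volume.restrict (Ioi (0:ℝ))),
      ∀ Z ∈ Metric.ball z₀ (z₀ / 2), ‖F' Z y‖ ≤ bound y := by
    filter_upwards [ae_restrict_mem measurableSet_Ioi] with y hy
    intro Z hZ
    have hy0 : (0:ℝ) < y := hy
    rcases le_or_gt y R with hyR | hyR
    · have h1 := hdzbound v hv Cdv hCdv y Z hy0 hyR hZ
      have h2 := hdzbound ψ hψ Cdψ hCdψ y Z hy0 hyR hZ
      have hKmem : ((y, Z) : ℝ × ℝ) ∈ K := ⟨⟨hy0.le, hyR⟩, hballIcc Z hZ⟩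
      have h3 : |v y Z| ≤ Cv := hCv _ hKmem
      have h4 : |ψ y Z| ≤ Cψ := hCψ _ hKmem
      have hb : bound y = Cb := by
        rw [hbound_def]; exact indicator_of_mem (show y ∈ Icc (0:ℝ) R from ⟨hy0.le, hyR⟩) _
      rw [hb, Real.norm_eq_abs]
      calc |dz v y Z * ψ y Z + v y Z * dz ψ y Z|
          ≤ |dz v y Z * ψ y Z| + |v y Z * dz ψ y Z| := abs_add_le _ _
        _ = |dz v y Z| * |ψ y Z| + |v y Z| * |dz ψ y Z| := by rw [abs_mul, abs_mul]
        _ ≤ Cdv * Cψ + Cv * Cdψ := by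
            apply add_le_add
            · exact mul_le_mul h1 h4 (abs_nonneg _) hCdv0
            · exact mul_le_mul h3 h2 (abs_nonneg _) hCv0
    · have hvz := (hRv Z (hballIcc Z hZ) y hyR.le).1
      have hψz := (hRv Z (hballIcc Z hZ) y hyR.le).2
      have h1 := hdz_zero v (fun z hz y hy => (hRv z hz y hy).1) y Z hyR hZ
      have h2 := hdz_zero ψ (fun z hz y hy => (hRv z hz y hy).2) y Z hyR hZ
      have hb : bound y = 0 := by
        rw [hbound_def]
        exact indicator_of_notMem (fun (hc : y ∈ Icc (0:ℝ) R) => absurd hc.2 (not_le.mpr hyR)) _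
      rw [hb]
      simp only [hF'_def, h1, h2, hvz, hψz, zero_mul, mul_zero, add_zero, norm_zero, le_refl]
  have bound_integrable : Integrable bound (volume.restrict (Ioi (0:ℝ))) := by
    rw [hbound_def, integrable_indicator_iff measurableSet_Icc]
    refine (integrableOn_const_iff (by simp)).mpr (Or.inr ?_)
    exact lt_of_le_of_lt (Measure.restrict_apply_le _ _) measure_Icc_lt_top
  have h_diff : ∀ᵐ y ∂(volume.restrict (Ioi (0:ℝ))),
      ∀ Z ∈ Metric.ball z₀ (z₀ / 2), HasDerivAt (fun W => F W y) (F' Z y) Z := by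
    filter_upwards [ae_restrict_mem measurableSet_Ioi] with y hy
    intro Z hZ
    have hy0 : (0:ℝ) < y := hy
    exact ((hasDerivAt_dz hv hy0 (hballpos Z hZ)).1.mul
      (hasDerivAt_dz hψ hy0 (hballpos Z hZ)).1)
  exact (hasDerivAt_integral_of_dominated_loc_of_deriv_le (Metric.ball_mem_nhds z₀ hεpos) hF_meas hF_int hF'_meas
    h_bound bound_integrable h_diff).2

/-- **Monotonicity of the energy.**
Let `v, ψ` be smooth on `[0,∞) × (0,∞)`, compactly supported in `y` (locally
uniformly in `z`), with `v(0,z) = ψ(0,z) = ∂_y ψ(0,z) = 0` and solving pointwise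
the homogeneous system `∂_z v + z∂_y v − (1/2)∂_y⁴ψ = 0`,
`∂_z ψ + z∂_y ψ + (1/2)∂_y²v = 0`.  Then `𝓔(z) = ∫₀^∞ v(y,z)ψ(y,z) dy` is
differentiable on `(0,∞)` with
`𝓔'(z) = (1/2)∫₀^∞ (|∂_y²ψ|² + |∂_y v|²) dy ≥ 0`. -/
theorem stmt8 (v ψ : ℝ → ℝ → ℝ)
    (hv : ContDiffOn ℝ (⊤ : ℕ∞) (fun p : ℝ × ℝ => v p.1 p.2) (Ici 0 ×ˢ Ioi 0))
    (hψ : ContDiffOn ℝ (⊤ : ℕ∞) (fun p : ℝ × ℝ => ψ p.1 p.2) (Ici 0 ×ˢ Ioi 0))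
    (hsuppv : ∀ z : ℝ, 0 < z → HasCompactSupport fun y => v y z)
    (hsuppψ : ∀ z : ℝ, 0 < z → HasCompactSupport fun y => ψ y z)
    (hsupp_unif : ∀ a b : ℝ, 0 < a → a ≤ b → ∃ R : ℝ, ∀ z ∈ Icc a b, ∀ y : ℝ,
      R ≤ y → v y z = 0 ∧ ψ y z = 0)
    (hbc_v : ∀ z : ℝ, 0 < z → v 0 z = 0)
    (hbc_ψ : ∀ z : ℝ, 0 < z → ψ 0 z = 0)
    (hbc_dψ : ∀ z : ℝ, 0 < z → derivWithin (fun y => ψ y z) (Ici 0) 0 = 0)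
    (heq₁ : ∀ y z : ℝ, 0 < y → 0 < z →
      dz v y z + z * dy v y z - (1 / 2) * dy4 ψ y z = 0)
    (heq₂ : ∀ y z : ℝ, 0 < y → 0 < z →
      dz ψ y z + z * dy ψ y z + (1 / 2) * dyy v y z = 0) :
    ∀ z : ℝ, 0 < z →
      HasDerivAt (fun Z : ℝ => ∫ y in Ioi (0:ℝ), v y Z * ψ y Z)
        ((1 / 2) * ∫ y in Ioi (0:ℝ), ((dyy ψ y z) ^ 2 + (dy v y z) ^ 2)) z ∧
      0 ≤ (1 / 2) * ∫ y in Ioi (0:ℝ), ((dyy ψ y z) ^ 2 + (dy v y z) ^ 2) := by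
  intro z hz
  obtain ⟨R₀, hR₀⟩ := hsupp_unif z z hz le_rfl
  have hRz := hR₀ z ⟨le_rfl, le_rfl⟩
  have hid := energy_identity v ψ hv hψ hbc_v hbc_ψ hbc_dψ heq₁ heq₂ z hz (max R₀ 0)
    (le_max_right _ _) (fun y hy => (hRz y (le_trans (le_max_left _ _) hy)).1)
    (fun y hy => (hRz y (le_trans (le_max_left _ _) hy)).2)
  constructor
  · have h := main_deriv v ψ hv hψ hsupp_unif z hz
    rwa [hid] at h
  · apply mul_nonneg (by norm_num)
    apply integral_nonneg
    intro y
    positivity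
end
end

section
/- Let H > 0 and let v, ψ : [0,∞) × [H,∞) → ℝ be smooth functions such that for each z ≥ H the functions v(·,z), ψ(·,z) have compact support in y (locally uniformly in z), satisfying v(0,z) = ψ(0,z) = ∂_y ψ(0,z) = 0 for all z ≥ H, solving pointwise the homogeneous modified system ∂_z v + z∂_y v − (1/2)∂_y⁴ψ − ψ = 0 and ∂_z ψ + z∂_y ψ + (1/2)∂_y²v − v = 0 on y > 0, z > H, and with ∫_H^∞ ∫₀^∞ ( |∂_y²ψ|² + |∂_y v|² + v² + ψ² ) dy dz < ∞ and ∫_H^∞ ∫₀^∞ |vψ| dy dz < ∞. Then ∫₀^∞ v(y,H) ψ(y,H) dy = − ∫_H^∞ [ (1/2)∫₀^∞ ( |∂_y²ψ|² + |∂_y v|² ) dy + ∫₀^∞ ( v² + ψ² ) dy ] dz ≤ 0. -/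
open MeasureTheory Set

noncomputable section

namespace Stmt11A


variable {H : ℝ}

/-- partial-in-y via fderivWithin on the closed region -/
def Py (H : ℝ) (f : ℝ × ℝ → ℝ) (p : ℝ × ℝ) : ℝ :=
  fderivWithin ℝ f (Ici 0 ×ˢ Ici H) p (1, 0)

def Pz (H : ℝ) (f : ℝ × ℝ → ℝ) (p : ℝ × ℝ) : ℝ :=
  fderivWithin ℝ f (Ici 0 ×ˢ Ici H) p (0, 1)

lemma udS (H : ℝ) : UniqueDiffOn ℝ ((Ici (0:ℝ)) ×ˢ (Ici H)) :=
  (uniqueDiffOn_Ici 0).prod (uniqueDiffOn_Ici H)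

lemma Py_smooth {f : ℝ × ℝ → ℝ} (hf : ContDiffOn ℝ (⊤ : ℕ∞) f (Ici 0 ×ˢ Ici H)) :
    ContDiffOn ℝ (⊤ : ℕ∞) (Py H f) (Ici 0 ×ˢ Ici H) :=
  ((hf.fderivWithin (udS H) (by simp)).clm_apply contDiffOn_const)

lemma Pz_smooth {f : ℝ × ℝ → ℝ} (hf : ContDiffOn ℝ (⊤ : ℕ∞) f (Ici 0 ×ˢ Ici H)) :
    ContDiffOn ℝ (⊤ : ℕ∞) (Pz H f) (Ici 0 ×ˢ Ici H) :=
  ((hf.fderivWithin (udS H) (by simp)).clm_apply contDiffOn_const)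

lemma mem_nhds_of_interior {p : ℝ × ℝ} (hp : p ∈ (Ioi (0:ℝ)) ×ˢ (Ioi H)) :
    (Ici (0:ℝ)) ×ˢ (Ici H) ∈ nhds p :=
  Filter.mem_of_superset ((isOpen_Ioi.prod isOpen_Ioi).mem_nhds hp)
    (prod_mono Ioi_subset_Ici_self Ioi_subset_Ici_self)

/-- slice in y has derivative Py at interior points -/
lemma slice_hasDerivAt_y {f : ℝ × ℝ → ℝ} (hf : ContDiffOn ℝ (⊤ : ℕ∞) f (Ici 0 ×ˢ Ici H))
    {p : ℝ × ℝ} (hp : p ∈ (Ioi (0:ℝ)) ×ˢ (Ioi H)) :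
    HasDerivAt (fun t => f (t, p.2)) (Py H f p) p.1 := by
  have hmem := mem_nhds_of_interior (H := H) hp
  have hd : DifferentiableAt ℝ f p :=
    (hf.contDiffAt hmem).differentiableAt (by simp)
  have h1 : Py H f p = fderiv ℝ f p (1, 0) := by
    unfold Py; rw [fderivWithin_of_mem_nhds hmem]
  rw [h1]
  have hline : HasDerivAt (fun t : ℝ => ((t, p.2) : ℝ × ℝ)) ((1:ℝ), (0:ℝ)) p.1 :=
    (hasDerivAt_id p.1).prodMk (hasDerivAt_const p.1 p.2)
  simpa [Function.comp_def] using hd.hasFDerivAt.comp_hasDerivAt p.1 hline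

lemma slice_hasDerivAt_z {f : ℝ × ℝ → ℝ} (hf : ContDiffOn ℝ (⊤ : ℕ∞) f (Ici 0 ×ˢ Ici H))
    {p : ℝ × ℝ} (hp : p ∈ (Ioi (0:ℝ)) ×ˢ (Ioi H)) :
    HasDerivAt (fun t => f (p.1, t)) (Pz H f p) p.2 := by
  have hmem := mem_nhds_of_interior (H := H) hp
  have hd : DifferentiableAt ℝ f p :=
    (hf.contDiffAt hmem).differentiableAt (by simp)
  have h1 : Pz H f p = fderiv ℝ f p (0, 1) := by
    unfold Pz; rw [fderivWithin_of_mem_nhds hmem]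
  rw [h1]
  have hline : HasDerivAt (fun t : ℝ => ((p.1, t) : ℝ × ℝ)) ((0:ℝ), (1:ℝ)) p.2 :=
    (hasDerivAt_const p.2 p.1).prodMk (hasDerivAt_id p.2)
  simpa [Function.comp_def] using hd.hasFDerivAt.comp_hasDerivAt p.2 hline

lemma Py_eq_deriv {f : ℝ × ℝ → ℝ} (hf : ContDiffOn ℝ (⊤ : ℕ∞) f (Ici 0 ×ˢ Ici H))
    {p : ℝ × ℝ} (hp : p ∈ (Ioi (0:ℝ)) ×ˢ (Ioi H)) :
    deriv (fun t => f (t, p.2)) p.1 = Py H f p :=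
  (slice_hasDerivAt_y hf hp).deriv

lemma Pz_eq_deriv {f : ℝ × ℝ → ℝ} (hf : ContDiffOn ℝ (⊤ : ℕ∞) f (Ici 0 ×ˢ Ici H))
    {p : ℝ × ℝ} (hp : p ∈ (Ioi (0:ℝ)) ×ˢ (Ioi H)) :
    deriv (fun t => f (p.1, t)) p.2 = Pz H f p :=
  (slice_hasDerivAt_z hf hp).deriv

/-- boundary: Py at (0,z) equals the one-sided derivWithin of the slice -/
lemma Py_eq_derivWithin {f : ℝ × ℝ → ℝ} (hf : ContDiffOn ℝ (⊤ : ℕ∞) f (Ici 0 ×ˢ Ici H))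
    {z : ℝ} (hz : H ≤ z) :
    Py H f (0, z) = derivWithin (fun t => f (t, z)) (Ici 0) 0 := by
  have hp : ((0:ℝ), z) ∈ (Ici (0:ℝ)) ×ˢ (Ici H) := ⟨self_mem_Ici, hz⟩
  have hd : HasFDerivWithinAt f (fderivWithin ℝ f (Ici 0 ×ˢ Ici H) (0, z))
      (Ici 0 ×ˢ Ici H) (0, z) :=
    ((hf.differentiableOn (by simp)) (0, z) hp).hasFDerivWithinAt
  have hline : HasDerivWithinAt (fun t : ℝ => ((t, z) : ℝ × ℝ)) ((1:ℝ), (0:ℝ)) (Ici 0) 0 :=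
    ((hasDerivAt_id (0:ℝ)).prodMk (hasDerivAt_const (0:ℝ) z)).hasDerivWithinAt
  have hmap : MapsTo (fun t : ℝ => ((t, z) : ℝ × ℝ)) (Ici 0) (Ici 0 ×ˢ Ici H) :=
    fun t ht => ⟨ht, hz⟩
  have := hd.comp_hasDerivWithinAt 0 hline hmap
  have h2 := this.derivWithin (uniqueDiffOn_Ici (0:ℝ) 0 self_mem_Ici)
  simpa [Py, Function.comp_def] using h2.symm

/-- vanishing is inherited by Py, Pz on open product boxes inside the region -/
lemma Py_vanish {f : ℝ × ℝ → ℝ} {R a b : ℝ} (hR : 0 ≤ R) (ha : H ≤ a)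
    (h0 : ∀ q ∈ (Ioi R) ×ˢ (Ioo a b), f q = 0) :
    ∀ q ∈ (Ioi R) ×ˢ (Ioo a b), Py H f q = 0 ∧ Pz H f q = 0 := by
  intro q hq
  have hopen : (Ioi R) ×ˢ (Ioo a b) ∈ nhds q := (isOpen_Ioi.prod isOpen_Ioo).mem_nhds hq
  have hev : f =ᶠ[nhdsWithin q (Ici 0 ×ˢ Ici H)] (fun _ => (0:ℝ)) :=
    Filter.mem_of_superset (nhdsWithin_le_nhds hopen) (fun x hx => h0 x hx)
  have hfd : fderivWithin ℝ f (Ici 0 ×ˢ Ici H) q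
      = fderivWithin ℝ (fun _ => (0:ℝ)) (Ici 0 ×ˢ Ici H) q :=
    hev.fderivWithin_eq (h0 q hq)
  have hqS : q ∈ (Ici (0:ℝ)) ×ˢ (Ici H) :=
    ⟨le_trans hR (le_of_lt hq.1), le_trans ha (le_of_lt hq.2.1)⟩
  have huq := udS H q hqS
  refine ⟨?_, ?_⟩
  · unfold Py; rw [hfd, fderivWithin_const_apply]; rfl
  · unfold Pz; rw [hfd, fderivWithin_const_apply]; rfl


lemma sliceContY {f : ℝ × ℝ → ℝ} (hf : ContinuousOn f (Ici 0 ×ˢ Ici H))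
    {z : ℝ} (hz : H ≤ z) : ContinuousOn (fun y => f (y, z)) (Ici 0) :=
  hf.comp (Continuous.continuousOn (by fun_prop)) (fun y hy => ⟨hy, hz⟩)

lemma sliceContZ {f : ℝ × ℝ → ℝ} (hf : ContinuousOn f (Ici 0 ×ˢ Ici H))
    {y : ℝ} (hy : 0 ≤ y) : ContinuousOn (fun z => f (y, z)) (Ici H) :=
  hf.comp (Continuous.continuousOn (by fun_prop)) (fun z hz => ⟨hy, hz⟩)

lemma sliceInt {f : ℝ × ℝ → ℝ} (hf : ContinuousOn f (Ici 0 ×ˢ Ici H))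
    {z R : ℝ} (hz : H ≤ z) (h0 : ∀ y, R ≤ y → f (y, z) = 0) :
    IntegrableOn (fun y => f (y, z)) (Ioi 0) := by
  set R' := max R 0 with hR'
  have hsub : Ioi (0:ℝ) ⊆ Ioc 0 R' ∪ Ioi R' := by
    intro y hy
    rcases le_or_gt y R' with h | h
    · exact Or.inl ⟨hy, h⟩
    · exact Or.inr h
  refine IntegrableOn.mono_set (IntegrableOn.union ?_ ?_) hsub
  · have : ContinuousOn (fun y => f (y, z)) (Icc 0 R') :=
      (sliceContY hf hz).mono Icc_subset_Ici_self
    exact this.integrableOn_Icc.mono_set Ioc_subset_Icc_self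
  · have : EqOn (fun y => f (y, z)) (fun _ => (0:ℝ)) (Ioi R') := by
      intro y hy
      exact h0 y (le_trans (le_max_left R 0) (le_of_lt hy))
    exact (integrableOn_zero (ε' := ℝ)).congr_fun this.symm measurableSet_Ioi


lemma iter_eq_y {f : ℝ × ℝ → ℝ} {g : ℝ → ℝ → ℝ} (hf : ContDiffOn ℝ (⊤ : ℕ∞) f (Ici 0 ×ˢ Ici H))
    (hg : ∀ p ∈ (Ioi (0:ℝ)) ×ˢ (Ioi H), g p.1 p.2 = f p) :
    ∀ p ∈ (Ioi (0:ℝ)) ×ˢ (Ioi H), dy g p.1 p.2 = Py H f p := by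
  intro p hp
  have hev : (fun t => g t p.2) =ᶠ[nhds p.1] (fun t => f (t, p.2)) := by
    have : Ioi (0:ℝ) ∈ nhds p.1 := isOpen_Ioi.mem_nhds hp.1
    exact Filter.mem_of_superset this (fun t ht => hg (t, p.2) ⟨ht, hp.2⟩)
  have : dy g p.1 p.2 = deriv (fun t => f (t, p.2)) p.1 := hev.deriv_eq
  rw [this]
  exact Py_eq_deriv hf hp

lemma iter_eq_z {f : ℝ × ℝ → ℝ} {g : ℝ → ℝ → ℝ} (hf : ContDiffOn ℝ (⊤ : ℕ∞) f (Ici 0 ×ˢ Ici H))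
    (hg : ∀ p ∈ (Ioi (0:ℝ)) ×ˢ (Ioi H), g p.1 p.2 = f p) :
    ∀ p ∈ (Ioi (0:ℝ)) ×ˢ (Ioi H), dz g p.1 p.2 = Pz H f p := by
  intro p hp
  have hev : (fun t => g p.1 t) =ᶠ[nhds p.2] (fun t => f (p.1, t)) := by
    have : Ioi H ∈ nhds p.2 := isOpen_Ioi.mem_nhds hp.2
    exact Filter.mem_of_superset this (fun t ht => hg (p.1, t) ⟨hp.1, ht⟩)
  have : dz g p.1 p.2 = deriv (fun t => f (p.1, t)) p.2 := hev.deriv_eq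
  rw [this]
  exact Pz_eq_deriv hf hp

end Stmt11A

open Stmt11A

/-- **Non-positivity of the `v`-to-`ψ` boundary operator: energy identity.**
Let `H > 0` and let `v, ψ` be smooth on `[0,∞) × [H,∞)`, compactly supported in `y`
locally uniformly in `z`, with `v(0,z) = ψ(0,z) = ∂_y ψ(0,z) = 0`, solving pointwise
the homogeneous modified system on `y > 0, z > H`, and with finite total energy and
`∫∫ |vψ| < ∞` on the region.  Then
`∫₀^∞ v(y,H)ψ(y,H) dy
  = −∫_H^∞ [ (1/2)∫₀^∞(|∂_y²ψ|² + |∂_y v|²) dy + ∫₀^∞(v² + ψ²) dy ] dz ≤ 0`. -/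
theorem stmt11 (H : ℝ) (hH : 0 < H) (v ψ : ℝ → ℝ → ℝ)
    (hv : ContDiffOn ℝ (⊤ : ℕ∞) (fun p : ℝ × ℝ => v p.1 p.2) (Ici 0 ×ˢ Ici H))
    (hψ : ContDiffOn ℝ (⊤ : ℕ∞) (fun p : ℝ × ℝ => ψ p.1 p.2) (Ici 0 ×ˢ Ici H))
    (hsuppv : ∀ z : ℝ, H ≤ z → HasCompactSupport fun y => v y z)
    (hsuppψ : ∀ z : ℝ, H ≤ z → HasCompactSupport fun y => ψ y z)
    (hsupp_unif : ∀ a b : ℝ, H ≤ a → a ≤ b → ∃ R : ℝ, ∀ z ∈ Icc a b, ∀ y : ℝ,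
      R ≤ y → v y z = 0 ∧ ψ y z = 0)
    (hbc_v : ∀ z : ℝ, H ≤ z → v 0 z = 0)
    (hbc_ψ : ∀ z : ℝ, H ≤ z → ψ 0 z = 0)
    (hbc_dψ : ∀ z : ℝ, H ≤ z → derivWithin (fun y => ψ y z) (Ici 0) 0 = 0)
    (heq₁ : ∀ y z : ℝ, 0 < y → H < z →
      dz v y z + z * dy v y z - (1 / 2) * dy4 ψ y z - ψ y z = 0)
    (heq₂ : ∀ y z : ℝ, 0 < y → H < z →
      dz ψ y z + z * dy ψ y z + (1 / 2) * dyy v y z - v y z = 0)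
    (henergy : IntegrableOn
      (fun p : ℝ × ℝ => (dyy ψ p.1 p.2) ^ 2 + (dy v p.1 p.2) ^ 2
        + (v p.1 p.2) ^ 2 + (ψ p.1 p.2) ^ 2) (Ioi 0 ×ˢ Ioi H))
    (hvψ : IntegrableOn (fun p : ℝ × ℝ => |v p.1 p.2 * ψ p.1 p.2|) (Ioi 0 ×ˢ Ioi H)) :
    (∫ y in Ioi (0:ℝ), v y H * ψ y H)
      = -∫ z in Ioi H, ((1 / 2) * (∫ y in Ioi (0:ℝ), ((dyy ψ y z) ^ 2 + (dy v y z) ^ 2))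
          + ∫ y in Ioi (0:ℝ), ((v y z) ^ 2 + (ψ y z) ^ 2)) ∧
    (∫ y in Ioi (0:ℝ), v y H * ψ y H) ≤ 0 := by
  classical
  set V : ℝ × ℝ → ℝ := fun p => v p.1 p.2 with hVdef
  set Ψ : ℝ × ℝ → ℝ := fun p => ψ p.1 p.2 with hΨdef
  set A : ℝ × ℝ → ℝ := Py H V with hAdef
  set A2 : ℝ × ℝ → ℝ := Py H A with hA2def
  set B : ℝ × ℝ → ℝ := Py H Ψ with hBdef
  set B2 : ℝ × ℝ → ℝ := Py H B with hB2def
  set B3 : ℝ × ℝ → ℝ := Py H B2 with hB3def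
  set B4 : ℝ × ℝ → ℝ := Py H B3 with hB4def
  set Cv : ℝ × ℝ → ℝ := Pz H V with hCvdef
  set Cψ : ℝ × ℝ → ℝ := Pz H Ψ with hCψdef
  set D1 : ℝ × ℝ → ℝ := fun p => (B2 p) ^ 2 + (A p) ^ 2 with hD1def
  set D2 : ℝ × ℝ → ℝ := fun p => (V p) ^ 2 + (Ψ p) ^ 2 with hD2def
  set Dfun : ℝ × ℝ → ℝ := fun p => (1 / 2) * D1 p + D2 p with hDdef
  set Sfun : ℝ × ℝ → ℝ := fun p => D1 p + D2 p with hSdef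
  set gfun : ℝ × ℝ → ℝ := fun p => Cv p * Ψ p + V p * Cψ p with hgdef
  set wfun : ℝ × ℝ → ℝ :=
    fun p => -p.2 * (V p * Ψ p) + (1 / 2) * (Ψ p * B3 p - B p * B2 p - V p * A p) with hwdef
  set E : ℝ → ℝ := fun z => ∫ y in Ioi (0:ℝ), v y z * ψ y z with hEdef
  set Fd : ℝ → ℝ := fun z => ∫ y in Ioi (0:ℝ), Dfun (y, z) with hFddef
  set T : ℝ → ℝ := fun z => ∫ y in Ioi (0:ℝ), Sfun (y, z) with hTdef
  set G : ℝ → ℝ := fun z => ∫ y in Ioi (0:ℝ), |v y z * ψ y z| with hGdef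
  -- smoothness of the derived functions
  have hAc : ContDiffOn ℝ (⊤ : ℕ∞) A (Ici 0 ×ˢ Ici H) := Py_smooth hv
  have hA2c : ContDiffOn ℝ (⊤ : ℕ∞) A2 (Ici 0 ×ˢ Ici H) := Py_smooth hAc
  have hBc : ContDiffOn ℝ (⊤ : ℕ∞) B (Ici 0 ×ˢ Ici H) := Py_smooth hψ
  have hB2c : ContDiffOn ℝ (⊤ : ℕ∞) B2 (Ici 0 ×ˢ Ici H) := Py_smooth hBc
  have hB3c : ContDiffOn ℝ (⊤ : ℕ∞) B3 (Ici 0 ×ˢ Ici H) := Py_smooth hB2c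
  have hB4c : ContDiffOn ℝ (⊤ : ℕ∞) B4 (Ici 0 ×ˢ Ici H) := Py_smooth hB3c
  have hCvc : ContDiffOn ℝ (⊤ : ℕ∞) Cv (Ici 0 ×ˢ Ici H) := Pz_smooth hv
  have hCψc : ContDiffOn ℝ (⊤ : ℕ∞) Cψ (Ici 0 ×ˢ Ici H) := Pz_smooth hψ
  have hD1c : ContinuousOn D1 (Ici 0 ×ˢ Ici H) :=
    ((hB2c.continuousOn.pow 2).add (hAc.continuousOn.pow 2))
  have hD2c : ContinuousOn D2 (Ici 0 ×ˢ Ici H) :=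
    ((hv.continuousOn.pow 2).add (hψ.continuousOn.pow 2))
  have hDc : ContinuousOn Dfun (Ici 0 ×ˢ Ici H) := (continuousOn_const.mul hD1c).add hD2c
  have hScont : ContinuousOn Sfun (Ici 0 ×ˢ Ici H) := hD1c.add hD2c
  have hgc : ContinuousOn gfun (Ici 0 ×ˢ Ici H) :=
    (hCvc.continuousOn.mul hψ.continuousOn).add (hv.continuousOn.mul hCψc.continuousOn)
  have hwc : ContinuousOn wfun (Ici 0 ×ˢ Ici H) := by
    apply ContinuousOn.add
    · exact (continuous_neg.comp continuous_snd).continuousOn.mul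
        (hv.continuousOn.mul hψ.continuousOn)
    · exact continuousOn_const.mul
        (((hψ.continuousOn.mul hB3c.continuousOn).sub
          (hBc.continuousOn.mul hB2c.continuousOn)).sub
          (hv.continuousOn.mul hAc.continuousOn))
  have hVΨc : ContinuousOn (fun p : ℝ × ℝ => V p * Ψ p) (Ici 0 ×ˢ Ici H) :=
    hv.continuousOn.mul hψ.continuousOn
  -- interior identifications of the statement's derivatives with the P-functions
  have hdyv : ∀ p ∈ (Ioi (0:ℝ)) ×ˢ (Ioi H), dy v p.1 p.2 = A p :=
    iter_eq_y hv (fun p _ => rfl)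
  have hdyyv : ∀ p ∈ (Ioi (0:ℝ)) ×ˢ (Ioi H), dyy v p.1 p.2 = A2 p :=
    iter_eq_y hAc hdyv
  have hdyψ : ∀ p ∈ (Ioi (0:ℝ)) ×ˢ (Ioi H), dy ψ p.1 p.2 = B p :=
    iter_eq_y hψ (fun p _ => rfl)
  have hdyyψ : ∀ p ∈ (Ioi (0:ℝ)) ×ˢ (Ioi H), dyy ψ p.1 p.2 = B2 p :=
    iter_eq_y hBc hdyψ
  have hdy3ψ : ∀ p ∈ (Ioi (0:ℝ)) ×ˢ (Ioi H), dy3 ψ p.1 p.2 = B3 p :=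
    iter_eq_y hB2c hdyyψ
  have hdy4ψ : ∀ p ∈ (Ioi (0:ℝ)) ×ˢ (Ioi H), dy4 ψ p.1 p.2 = B4 p :=
    iter_eq_y hB3c hdy3ψ
  have hdzv : ∀ p ∈ (Ioi (0:ℝ)) ×ˢ (Ioi H), dz v p.1 p.2 = Cv p :=
    iter_eq_z hv (fun p _ => rfl)
  have hdzψ : ∀ p ∈ (Ioi (0:ℝ)) ×ˢ (Ioi H), dz ψ p.1 p.2 = Cψ p :=
    iter_eq_z hψ (fun p _ => rfl)
  -- PDE in P-form
  have hPDE1 : ∀ p ∈ (Ioi (0:ℝ)) ×ˢ (Ioi H),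
      Cv p + p.2 * A p - (1 / 2) * B4 p - Ψ p = 0 := by
    intro p hp
    have := heq₁ p.1 p.2 hp.1 hp.2
    rw [hdzv p hp, hdyv p hp, hdy4ψ p hp] at this
    exact this
  have hPDE2 : ∀ p ∈ (Ioi (0:ℝ)) ×ˢ (Ioi H),
      Cψ p + p.2 * B p + (1 / 2) * A2 p - V p = 0 := by
    intro p hp
    have := heq₂ p.1 p.2 hp.1 hp.2
    rw [hdzψ p hp, hdyψ p hp, hdyyv p hp] at this
    exact this
  -- support of everything on boxes
  have hsupp : ∀ a b : ℝ, H ≤ a → a ≤ b → ∃ R : ℝ, 0 ≤ R ∧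
      ∀ q ∈ (Ioi R) ×ˢ (Ioo a b), V q = 0 ∧ Ψ q = 0 ∧ A q = 0 ∧ A2 q = 0 ∧ B q = 0 ∧
        B2 q = 0 ∧ B3 q = 0 ∧ B4 q = 0 ∧ Cv q = 0 ∧ Cψ q = 0 := by
    intro a b ha hab
    obtain ⟨R₀, hR₀⟩ := hsupp_unif a b ha hab
    refine ⟨max R₀ 0, le_max_right _ _, ?_⟩
    have hV0 : ∀ q ∈ (Ioi (max R₀ 0)) ×ˢ (Ioo a b), V q = 0 := by
      intro q hq
      exact (hR₀ q.2 (Ioo_subset_Icc_self hq.2) q.1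
        (le_trans (le_max_left _ _) (le_of_lt hq.1))).1
    have hΨ0 : ∀ q ∈ (Ioi (max R₀ 0)) ×ˢ (Ioo a b), Ψ q = 0 := by
      intro q hq
      exact (hR₀ q.2 (Ioo_subset_Icc_self hq.2) q.1
        (le_trans (le_max_left _ _) (le_of_lt hq.1))).2
    have hRn : (0:ℝ) ≤ max R₀ 0 := le_max_right _ _
    have hA0 : ∀ q ∈ (Ioi (max R₀ 0)) ×ˢ (Ioo a b), A q = 0 :=
      fun q hq => (Py_vanish hRn ha hV0 q hq).1
    have hA20 : ∀ q ∈ (Ioi (max R₀ 0)) ×ˢ (Ioo a b), A2 q = 0 :=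
      fun q hq => (Py_vanish hRn ha hA0 q hq).1
    have hB0 : ∀ q ∈ (Ioi (max R₀ 0)) ×ˢ (Ioo a b), B q = 0 :=
      fun q hq => (Py_vanish hRn ha hΨ0 q hq).1
    have hB20 : ∀ q ∈ (Ioi (max R₀ 0)) ×ˢ (Ioo a b), B2 q = 0 :=
      fun q hq => (Py_vanish hRn ha hB0 q hq).1
    have hB30 : ∀ q ∈ (Ioi (max R₀ 0)) ×ˢ (Ioo a b), B3 q = 0 :=
      fun q hq => (Py_vanish hRn ha hB20 q hq).1
    have hB40 : ∀ q ∈ (Ioi (max R₀ 0)) ×ˢ (Ioo a b), B4 q = 0 :=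
      fun q hq => (Py_vanish hRn ha hB30 q hq).1
    have hCv0 : ∀ q ∈ (Ioi (max R₀ 0)) ×ˢ (Ioo a b), Cv q = 0 :=
      fun q hq => (Py_vanish hRn ha hV0 q hq).2
    have hCψ0 : ∀ q ∈ (Ioi (max R₀ 0)) ×ˢ (Ioo a b), Cψ q = 0 :=
      fun q hq => (Py_vanish hRn ha hΨ0 q hq).2
    exact fun q hq => ⟨hV0 q hq, hΨ0 q hq, hA0 q hq, hA20 q hq, hB0 q hq, hB20 q hq,
      hB30 q hq, hB40 q hq, hCv0 q hq, hCψ0 q hq⟩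
  -- boundary values
  have hbV0 : ∀ z : ℝ, H ≤ z → V (0, z) = 0 := fun z hz => hbc_v z hz
  have hbΨ0 : ∀ z : ℝ, H ≤ z → Ψ (0, z) = 0 := fun z hz => hbc_ψ z hz
  have hbB0 : ∀ z : ℝ, H ≤ z → B (0, z) = 0 := by
    intro z hz
    rw [hBdef, Py_eq_derivWithin hψ hz]
    exact hbc_dψ z hz
  -- slice integrability
  have hIntVΨ : ∀ z : ℝ, H ≤ z → IntegrableOn (fun y => v y z * ψ y z) (Ioi 0) := by
    intro z hz
    obtain ⟨R₀, hR₀⟩ := hsupp_unif z z hz le_rfl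
    exact sliceInt hVΨc hz (R := R₀) (fun y hy => by
      simp [hVdef, hΨdef, (hR₀ z ⟨le_rfl, le_rfl⟩ y hy).1])
  have hbox : ∀ z : ℝ, H < z → ∃ R : ℝ, 0 ≤ R ∧
      ∀ q ∈ (Ioi R) ×ˢ (Ioo ((H + z) / 2) (z + 1)), V q = 0 ∧ Ψ q = 0 ∧ A q = 0 ∧
        A2 q = 0 ∧ B q = 0 ∧ B2 q = 0 ∧ B3 q = 0 ∧ B4 q = 0 ∧ Cv q = 0 ∧ Cψ q = 0 := by
    intro z hz
    exact hsupp ((H + z) / 2) (z + 1) (by linarith) (by linarith)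
  have hzmem : ∀ z : ℝ, H < z → z ∈ Ioo ((H + z) / 2) (z + 1) := by
    intro z hz; constructor <;> [linarith; linarith]
  have hIntD1 : ∀ z : ℝ, H < z → IntegrableOn (fun y => D1 (y, z)) (Ioi 0) := by
    intro z hz
    obtain ⟨R, hR0, hR⟩ := hbox z hz
    refine sliceInt hD1c (le_of_lt hz) (R := R + 1) (fun y hy => ?_)
    have h := hR (y, z) ⟨lt_of_lt_of_le (by linarith) hy, hzmem z hz⟩
    simp [hD1def, h.2.2.2.2.2.1, h.2.2.1]
  have hIntD2 : ∀ z : ℝ, H < z → IntegrableOn (fun y => D2 (y, z)) (Ioi 0) := by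
    intro z hz
    obtain ⟨R, hR0, hR⟩ := hbox z hz
    refine sliceInt hD2c (le_of_lt hz) (R := R + 1) (fun y hy => ?_)
    have h := hR (y, z) ⟨lt_of_lt_of_le (by linarith) hy, hzmem z hz⟩
    simp [hD2def, h.1, h.2.1]
  have hIntD : ∀ z : ℝ, H < z → IntegrableOn (fun y => Dfun (y, z)) (Ioi 0) := by
    intro z hz
    exact ((hIntD1 z hz).const_mul _).add (hIntD2 z hz)
  have hIntS : ∀ z : ℝ, H < z → IntegrableOn (fun y => Sfun (y, z)) (Ioi 0) := by
    intro z hz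
    exact (hIntD1 z hz).add (hIntD2 z hz)
  have hIntg : ∀ z : ℝ, H < z → IntegrableOn (fun y => gfun (y, z)) (Ioi 0) := by
    intro z hz
    obtain ⟨R, hR0, hR⟩ := hbox z hz
    refine sliceInt hgc (le_of_lt hz) (R := R + 1) (fun y hy => ?_)
    have h := hR (y, z) ⟨lt_of_lt_of_le (by linarith) hy, hzmem z hz⟩
    simp [hgdef, h.1, h.2.1]
  -- the key integration-by-parts identity in y
  have hkey : ∀ z : ℝ, H < z →
      ∫ y in Ioi (0:ℝ), gfun (y, z) = ∫ y in Ioi (0:ℝ), Dfun (y, z) := by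
    intro z hz
    obtain ⟨R, hR0, hR⟩ := hbox z hz
    set R' : ℝ := R + 1 with hR'def
    have hzb := hzmem z hz
    have hzH : H ≤ z := le_of_lt hz
    -- the boundary potential w
    set w : ℝ → ℝ := fun t => wfun (t, z) with hwzdef
    have hw0 : w 0 = 0 := by
      simp [hwzdef, hwdef, hbV0 z hzH, hbΨ0 z hzH, hbB0 z hzH]
    have hwR : w R' = 0 := by
      have h := hR (R', z) ⟨by simp [hR'def], hzb⟩
      simp [hwzdef, hwdef, h.1, h.2.1, h.2.2.1, h.2.2.2.2.1]
    -- w is continuous on [0, R']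
    have hwcont : ContinuousOn w (Icc 0 R') :=
      (sliceContY hwc hzH).mono Icc_subset_Ici_self
    -- derivative of w on (0, R')
    have hwderiv : ∀ t ∈ Ioo (0:ℝ) R',
        HasDerivAt w (gfun (t, z) - Dfun (t, z)) t := by
      intro t ht
      have hti : ((t, z) : ℝ × ℝ) ∈ (Ioi (0:ℝ)) ×ˢ (Ioi H) := ⟨ht.1, hz⟩
      have hVt : HasDerivAt (fun s => V (s, z)) (A (t, z)) t := slice_hasDerivAt_y hv hti
      have hΨt : HasDerivAt (fun s => Ψ (s, z)) (B (t, z)) t := slice_hasDerivAt_y hψ hti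
      have hAt : HasDerivAt (fun s => A (s, z)) (A2 (t, z)) t := slice_hasDerivAt_y hAc hti
      have hBt : HasDerivAt (fun s => B (s, z)) (B2 (t, z)) t := slice_hasDerivAt_y hBc hti
      have hB2t : HasDerivAt (fun s => B2 (s, z)) (B3 (t, z)) t := slice_hasDerivAt_y hB2c hti
      have hB3t : HasDerivAt (fun s => B3 (s, z)) (B4 (t, z)) t := slice_hasDerivAt_y hB3c hti
      have hcomb : HasDerivAt w
          (-z * (A (t, z) * Ψ (t, z) + V (t, z) * B (t, z)) + (1 / 2) *
            ((B (t, z) * B3 (t, z) + Ψ (t, z) * B4 (t, z))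
              - (B2 (t, z) * B2 (t, z) + B (t, z) * B3 (t, z))
              - (A (t, z) * A (t, z) + V (t, z) * A2 (t, z)))) t := by
        exact (((hVt.mul hΨt).const_mul (-z)).add
          ((((hΨt.mul hB3t).sub (hBt.mul hB2t)).sub (hVt.mul hAt)).const_mul (1 / 2)))
      have h1 := hPDE1 (t, z) hti
      have h2 := hPDE2 (t, z) hti
      convert hcomb using 1
      simp only [hgdef, hDdef, hD1def, hD2def] at *
      linear_combination (Ψ (t, z)) * h1 + (V (t, z)) * h2
    -- FTC on [0, R']
    have hR'pos : (0:ℝ) ≤ R' := by linarith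
    have hf'cont : ContinuousOn (fun t => gfun (t, z) - Dfun (t, z)) (Icc 0 R') :=
      ((sliceContY hgc hzH).sub (sliceContY hDc hzH)).mono Icc_subset_Ici_self
    have hFTCy : ∫ t in (0:ℝ)..R', (gfun (t, z) - Dfun (t, z)) = 0 := by
      rw [intervalIntegral.integral_eq_sub_of_hasDeriv_right_of_le hR'pos hwcont
        (fun t ht => (hwderiv t ht).hasDerivWithinAt)
        ((hf'cont.mono (by rw [uIcc_of_le hR'pos])).intervalIntegrable), hwR, hw0, sub_zero]
    -- vanishing beyond R'
    have hvan : ∀ y ∈ Ioi R', gfun (y, z) - Dfun (y, z) = 0 := by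
      intro y hy
      have h := hR (y, z) ⟨by simp only [hR'def] at hy; exact lt_trans (by linarith : R < R + 1) hy, hzb⟩
      simp [hgdef, hDdef, hD1def, hD2def, h.1, h.2.1, h.2.2.1, h.2.2.2.2.2.1]
    -- assemble
    have hIntsub : IntegrableOn (fun y => gfun (y, z) - Dfun (y, z)) (Ioi 0) :=
      (hIntg z hz).sub (hIntD z hz)
    have hIoi : ∫ y in Ioi (0:ℝ), (gfun (y, z) - Dfun (y, z)) = 0 := by
      have hsplit : Ioc (0:ℝ) R' ∪ Ioi R' = Ioi (0:ℝ) := Ioc_union_Ioi_eq_Ioi hR'pos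
      rw [← hsplit, setIntegral_union (Ioc_disjoint_Ioi le_rfl) measurableSet_Ioi
        (hIntsub.mono_set (by rw [← hsplit]; exact subset_union_left))
        (hIntsub.mono_set (by rw [← hsplit]; exact subset_union_right))]
      have h2 : ∫ y in Ioi R', (gfun (y, z) - Dfun (y, z)) = 0 := by
        rw [setIntegral_congr_fun measurableSet_Ioi hvan]
        simp
      rw [h2, add_zero, ← intervalIntegral.integral_of_le hR'pos, hFTCy]
    have := integral_sub (hIntg z hz) (hIntD z hz)
    rw [hIoi] at this
    linarith [this.symm]
  -- derivative of E
  have hE' : ∀ z : ℝ, H < z → HasDerivAt E (Fd z) z := by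
    intro z₀ hz₀
    obtain ⟨R, hR0, hR⟩ := hbox z₀ hz₀
    set a : ℝ := (H + z₀) / 2 with hadef
    set b : ℝ := z₀ + 1 with hbdef
    have hab : z₀ ∈ Ioo a b := hzmem z₀ hz₀
    have haH : H < a := by rw [hadef]; linarith
    obtain ⟨ε, hε, hball⟩ := Metric.isOpen_iff.1 isOpen_Ioo z₀ hab
    -- bound for gfun on the compact box
    have hK : IsCompact ((Icc (0:ℝ) (R + 1)) ×ˢ (Icc a b)) :=
      isCompact_Icc.prod isCompact_Icc
    have hKS : ((Icc (0:ℝ) (R + 1)) ×ˢ (Icc a b)) ⊆ (Ici 0 ×ˢ Ici H) :=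
      prod_mono Icc_subset_Ici_self (Icc_subset_Ici_self.trans (Ici_subset_Ici.2 (le_of_lt haH)))
    obtain ⟨C, hC⟩ := hK.exists_bound_of_continuousOn (hgc.mono hKS)
    set bound : ℝ → ℝ := indicator (Icc (0:ℝ) (R + 1)) (fun _ => C) with hbounddef
    have hbound_int : Integrable bound (volume.restrict (Ioi 0)) := by
      rw [hbounddef, integrable_indicator_iff measurableSet_Icc]
      refine integrableOn_const (ne_of_lt ?_)
      exact lt_of_le_of_lt (Measure.restrict_apply_le _ _) measure_Icc_lt_top
    have hmeas : ∀ x ∈ Ioo a b, AEStronglyMeasurable (fun y => v y x * ψ y x)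
        (volume.restrict (Ioi 0)) := by
      intro x hx
      have hxH : H ≤ x := le_of_lt (lt_trans haH hx.1)
      exact ((sliceContY hVΨc hxH).mono Ioi_subset_Ici_self).aestronglyMeasurable
        measurableSet_Ioi
    have key := (hasDerivAt_integral_of_dominated_loc_of_deriv_le (Metric.ball_mem_nhds z₀ hε)
      (F := fun x y => v y x * ψ y x) (F' := fun x y => gfun (y, x))
      (bound := bound)
      (by
        filter_upwards [isOpen_Ioo.mem_nhds hab] with x hx
        exact hmeas x hx)
      (hIntVΨ z₀ (le_of_lt hz₀))
      (((sliceContY hgc (le_of_lt hz₀)).mono Ioi_subset_Ici_self).aestronglyMeasurable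
        measurableSet_Ioi)
      (by
        refine (ae_restrict_iff' measurableSet_Ioi).2 (Filter.Eventually.of_forall ?_)
        intro y hy x hx
        show ‖gfun (y, x)‖ ≤ bound y
        have hxab : x ∈ Ioo a b := hball hx
        rcases le_or_gt y (R + 1) with hyR | hyR
        · have hyIcc : y ∈ Icc (0:ℝ) (R + 1) := mem_Icc.2 ⟨le_of_lt (mem_Ioi.1 hy), hyR⟩
          have hmemK : ((y, x) : ℝ × ℝ) ∈ (Icc (0:ℝ) (R + 1)) ×ˢ (Icc a b) :=
            mem_prod.2 ⟨hyIcc, Ioo_subset_Icc_self hxab⟩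
          have hb : bound y = C := by
            rw [hbounddef, indicator_of_mem hyIcc]
          rw [hb]
          exact hC _ hmemK
        · have hyR' : y ∈ Ioi R := by simp only [mem_Ioi]; linarith
          have h0 := hR (y, x) ⟨hyR', hxab⟩
          have : gfun (y, x) = 0 := by simp [hgdef, h0.1, h0.2.1]
          have hb : bound y = 0 := by
            rw [hbounddef, indicator_of_notMem (fun hc => by
              have := hc.2; linarith)]
          rw [this, hb, norm_zero])
      hbound_int
      (by
        refine (ae_restrict_iff' measurableSet_Ioi).2 (Filter.Eventually.of_forall ?_)
        intro y hy x hx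
        show HasDerivAt (fun t => v y t * ψ y t) (gfun (y, x)) x
        have hxab : x ∈ Ioo a b := hball hx
        have hxi : ((y, x) : ℝ × ℝ) ∈ (Ioi (0:ℝ)) ×ˢ (Ioi H) :=
          ⟨hy, lt_trans haH hxab.1⟩
        have hVz : HasDerivAt (fun t => V (y, t)) (Cv (y, x)) x := slice_hasDerivAt_z hv hxi
        have hΨz : HasDerivAt (fun t => Ψ (y, t)) (Cψ (y, x)) x := slice_hasDerivAt_z hψ hxi
        exact hVz.mul hΨz)).2
    rw [hEdef]
    have : Fd z₀ = ∫ y in Ioi (0:ℝ), gfun (y, z₀) := (hkey z₀ hz₀).symm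
    rw [this]
    exact key
  -- continuity of E
  have hEcont : ∀ b : ℝ, H ≤ b → ContinuousOn E (Icc H b) := by
    intro b hb
    obtain ⟨R₀, hR₀⟩ := hsupp_unif H b le_rfl hb
    set R' : ℝ := max R₀ 0 + 1 with hR'def
    have hR'0 : (0:ℝ) ≤ R' := by positivity
    have hK : IsCompact ((Icc (0:ℝ) R') ×ˢ (Icc H b)) := isCompact_Icc.prod isCompact_Icc
    have hKS : ((Icc (0:ℝ) R') ×ˢ (Icc H b)) ⊆ (Ici 0 ×ˢ Ici H) :=
      prod_mono Icc_subset_Ici_self Icc_subset_Ici_self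
    obtain ⟨C, hC⟩ := hK.exists_bound_of_continuousOn (hVΨc.mono hKS)
    intro z₀ hz₀
    refine continuousWithinAt_of_dominated (F := fun x y => v y x * ψ y x)
      (bound := indicator (Icc (0:ℝ) R') (fun _ => C)) ?_ ?_ ?_ ?_
    · filter_upwards [self_mem_nhdsWithin] with x hx
      exact ((sliceContY hVΨc hx.1).mono Ioi_subset_Ici_self).aestronglyMeasurable
        measurableSet_Ioi
    · filter_upwards [self_mem_nhdsWithin] with x hx
      refine (ae_restrict_iff' measurableSet_Ioi).2 (Filter.Eventually.of_forall ?_)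
      intro y hy
      rcases le_or_gt y R' with hyR | hyR
      · have hyIcc : y ∈ Icc (0:ℝ) R' := mem_Icc.2 ⟨le_of_lt (mem_Ioi.1 hy), hyR⟩
        rw [indicator_of_mem hyIcc]
        exact hC ((y, x) : ℝ × ℝ) (mem_prod.2 ⟨hyIcc, hx⟩)
      · have hyy : R₀ ≤ y := by
          have h1 : max R₀ 0 + 1 < y := by rw [← hR'def]; exact hyR
          linarith [le_max_left R₀ (0:ℝ)]
        have h0 : v y x = 0 := (hR₀ x hx y hyy).1
        rw [indicator_of_notMem (fun hc => by exact absurd hc.2 (not_le.2 hyR))]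
        simp [h0]
    · rw [integrable_indicator_iff measurableSet_Icc]
      refine integrableOn_const (ne_of_lt ?_)
      exact lt_of_le_of_lt (Measure.restrict_apply_le _ _) measure_Icc_lt_top
    · refine (ae_restrict_iff' measurableSet_Ioi).2 (Filter.Eventually.of_forall ?_)
      intro y hy
      show ContinuousWithinAt (fun x => v y x * ψ y x) (Icc H b) z₀
      exact ((sliceContZ hVΨc (le_of_lt (mem_Ioi.1 hy))).mono Icc_subset_Ici_self) z₀ hz₀
  -- nonnegativity
  have hFd0 : ∀ z : ℝ, 0 ≤ Fd z := by
    intro z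
    refine setIntegral_nonneg measurableSet_Ioi (fun y hy => ?_)
    simp only [hDdef, hD1def, hD2def]
    positivity
  -- continuity (hence measurability) of Fd on (H, ∞)
  have hFdcont : ContinuousOn Fd (Ioi H) := by
    intro z₀ hz₀
    have hz₀' : H < z₀ := hz₀
    obtain ⟨R, hR0, hR⟩ := hbox z₀ hz₀'
    set a : ℝ := (H + z₀) / 2 with hadef
    set b : ℝ := z₀ + 1 with hbdef
    have hab : z₀ ∈ Ioo a b := hzmem z₀ hz₀'
    have haH : H < a := by rw [hadef]; linarith
    have hK : IsCompact ((Icc (0:ℝ) (R + 1)) ×ˢ (Icc a b)) := isCompact_Icc.prod isCompact_Icc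
    have hKS : ((Icc (0:ℝ) (R + 1)) ×ˢ (Icc a b)) ⊆ (Ici 0 ×ˢ Ici H) :=
      prod_mono Icc_subset_Ici_self (Icc_subset_Ici_self.trans (Ici_subset_Ici.2 (le_of_lt haH)))
    obtain ⟨C, hC⟩ := hK.exists_bound_of_continuousOn (hDc.mono hKS)
    refine ContinuousAt.continuousWithinAt ?_
    refine continuousAt_of_dominated (F := fun x y => Dfun (y, x))
      (bound := indicator (Icc (0:ℝ) (R + 1)) (fun _ => C)) ?_ ?_ ?_ ?_
    · filter_upwards [isOpen_Ioo.mem_nhds hab] with x hx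
      exact ((sliceContY hDc (le_of_lt (lt_trans haH hx.1))).mono
        Ioi_subset_Ici_self).aestronglyMeasurable measurableSet_Ioi
    · filter_upwards [isOpen_Ioo.mem_nhds hab] with x hx
      refine (ae_restrict_iff' measurableSet_Ioi).2 (Filter.Eventually.of_forall ?_)
      intro y hy
      show ‖Dfun (y, x)‖ ≤ indicator (Icc (0:ℝ) (R + 1)) (fun _ => C) y
      rcases le_or_gt y (R + 1) with hyR | hyR
      · have hyIcc : y ∈ Icc (0:ℝ) (R + 1) := mem_Icc.2 ⟨le_of_lt (mem_Ioi.1 hy), hyR⟩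
        rw [indicator_of_mem hyIcc]
        exact hC ((y, x) : ℝ × ℝ) (mem_prod.2 ⟨hyIcc, Ioo_subset_Icc_self hx⟩)
      · have hyR' : y ∈ Ioi R := by simp only [mem_Ioi]; linarith
        have h0 := hR (y, x) ⟨hyR', hx⟩
        have hD0 : Dfun (y, x) = 0 := by
          simp [hDdef, hD1def, hD2def, h0.1, h0.2.1, h0.2.2.1, h0.2.2.2.2.2.1]
        rw [hD0, indicator_of_notMem (fun hc => by exact absurd hc.2 (not_le.2 hyR)),
          norm_zero]
    · rw [integrable_indicator_iff measurableSet_Icc]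
      refine integrableOn_const (ne_of_lt ?_)
      exact lt_of_le_of_lt (Measure.restrict_apply_le _ _) measure_Icc_lt_top
    · refine (ae_restrict_iff' measurableSet_Ioi).2 (Filter.Eventually.of_forall ?_)
      intro y hy
      show ContinuousAt (fun x => Dfun (y, x)) z₀
      have h1 : ContinuousAt Dfun (y, z₀) :=
        hDc.continuousAt (mem_nhds_of_interior (H := H) ⟨hy, hz₀⟩)
      exact h1.comp (Continuous.continuousAt (by fun_prop))
  -- integrability of T and Fd
  have hTint : IntegrableOn T (Ioi H) := by
    have h1 : IntegrableOn Sfun (Ioi 0 ×ˢ Ioi H) := by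
      refine henergy.congr_fun ?_ (measurableSet_Ioi.prod measurableSet_Ioi)
      intro p hp
      simp only [hSdef, hD1def, hD2def, ← hdyyψ p hp, ← hdyv p hp, hVdef, hΨdef]
      ring
    have h2 : Integrable Sfun ((volume.restrict (Ioi (0:ℝ))).prod (volume.restrict (Ioi H))) := by
      rw [Measure.prod_restrict]; exact h1
    exact h2.integral_prod_right
  have hFd_le_T : ∀ z ∈ Ioi H, Fd z ≤ T z := by
    intro z hz
    refine setIntegral_mono_on (hIntD z hz) (hIntS z hz) measurableSet_Ioi (fun y hy => ?_)
    simp only [hDdef, hSdef, hD1def, hD2def]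
    nlinarith [sq_nonneg (B2 (y, z)), sq_nonneg (A (y, z))]
  have hFdint : IntegrableOn Fd (Ioi H) := by
    refine Integrable.mono hTint (hFdcont.aestronglyMeasurable measurableSet_Ioi) ?_
    refine (ae_restrict_iff' measurableSet_Ioi).2 (Filter.Eventually.of_forall fun z hz => ?_)
    rw [Real.norm_eq_abs, Real.norm_eq_abs, abs_of_nonneg (hFd0 z)]
    exact le_trans (hFd_le_T z hz) (le_abs_self _)
  -- FTC in z
  have hFTC : ∀ b : ℝ, H < b → ∫ z in H..b, Fd z = E b - E H := by
    intro b hb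
    refine intervalIntegral.integral_eq_sub_of_hasDeriv_right_of_le (le_of_lt hb)
      (hEcont b (le_of_lt hb)) (fun z hz => (hE' z hz.1).hasDerivWithinAt) ?_
    exact (intervalIntegrable_iff_integrableOn_Ioc_of_le (le_of_lt hb)).2
      (hFdint.mono_set Ioc_subset_Ioi_self)
  -- integrability of G, and |E| ≤ G
  have hGint : IntegrableOn G (Ioi H) := by
    have h2 : Integrable (fun p : ℝ × ℝ => |v p.1 p.2 * ψ p.1 p.2|)
        ((volume.restrict (Ioi (0:ℝ))).prod (volume.restrict (Ioi H))) := by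
      rw [Measure.prod_restrict]; exact hvψ
    exact h2.integral_prod_right
  have hEG : ∀ z : ℝ, |E z| ≤ G z := by
    intro z
    have := norm_integral_le_integral_norm (μ := volume.restrict (Ioi (0:ℝ)))
      (fun y => v y z * ψ y z)
    simpa only [Real.norm_eq_abs] using this
  -- the limit identity
  have hmain : E H = -∫ z in Ioi H, Fd z := by
    set I : ℝ := ∫ z in Ioi H, Fd z with hIdef
    have hlim : Filter.Tendsto (fun b => ∫ z in H..b, Fd z) Filter.atTop (nhds I) :=
      intervalIntegral_tendsto_integral_Ioi H hFdint Filter.tendsto_id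
    have hEt : Filter.Tendsto E Filter.atTop (nhds (E H + I)) := by
      have hev : ∀ᶠ b in Filter.atTop, E H + ∫ z in H..b, Fd z = E b := by
        filter_upwards [Filter.eventually_gt_atTop H] with b hb
        rw [hFTC b hb]; ring
      exact Filter.Tendsto.congr' hev (tendsto_const_nhds.add hlim)
    have hL0 : E H + I = 0 := by
      by_contra hL
      set L : ℝ := E H + I with hLdef
      have hc : 0 < |L| / 2 := by positivity
      obtain ⟨M, hM⟩ := Metric.tendsto_atTop.1 hEt (|L| / 2) hc
      set M' : ℝ := max M (H + 1) with hM'def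
      have hM'H : H < M' := lt_of_lt_of_le (by linarith) (le_max_right _ _)
      have hlow : ∀ z, M' ≤ z → |L| / 2 ≤ G z := by
        intro z hzM
        have h1 := hM z (le_trans (le_max_left _ _) hzM)
        have h3 : |L| - |E z| ≤ |E z - L| := by
          rw [abs_sub_comm]
          exact abs_sub_abs_le_abs_sub L (E z)
        rw [Real.dist_eq] at h1
        linarith [hEG z]
      have hconst : Integrable (fun _ : ℝ => |L| / 2) (volume.restrict (Ioi M')) := by
        refine Integrable.mono (hGint.mono_set (Ioi_subset_Ioi (le_of_lt hM'H)))
          aestronglyMeasurable_const ?_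
        refine (ae_restrict_iff' measurableSet_Ioi).2 (Filter.Eventually.of_forall
          fun z hz => ?_)
        rw [Real.norm_eq_abs, Real.norm_eq_abs, abs_of_nonneg (le_of_lt hc)]
        exact le_trans (hlow z (le_of_lt hz)) (le_abs_self _)
      rcases integrable_const_iff.1 hconst with h | h
      · exact absurd h (by positivity)
      · have h := h.measure_univ_lt_top; rw [Measure.restrict_apply_univ, Real.volume_Ioi] at h
        exact absurd h (by simp)
    linarith
  -- final rewriting
  have hI0 : 0 ≤ ∫ z in Ioi H, Fd z :=
    setIntegral_nonneg measurableSet_Ioi (fun z _ => hFd0 z)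
  have hcongrz : ∫ z in Ioi H,
      ((1 / 2) * (∫ y in Ioi (0:ℝ), ((dyy ψ y z) ^ 2 + (dy v y z) ^ 2))
        + ∫ y in Ioi (0:ℝ), ((v y z) ^ 2 + (ψ y z) ^ 2)) = ∫ z in Ioi H, Fd z := by
    refine setIntegral_congr_fun measurableSet_Ioi (fun z hz => ?_)
    have hz' : H < z := hz
    have hy1 : ∫ y in Ioi (0:ℝ), ((dyy ψ y z) ^ 2 + (dy v y z) ^ 2)
        = ∫ y in Ioi (0:ℝ), D1 (y, z) := by
      refine setIntegral_congr_fun measurableSet_Ioi (fun y hy => ?_)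
      have hyz : ((y, z) : ℝ × ℝ) ∈ (Ioi (0:ℝ)) ×ˢ (Ioi H) := ⟨hy, hz'⟩
      simp only [hD1def, ← hdyyψ (y, z) hyz, ← hdyv (y, z) hyz]
    have hy2 : ∫ y in Ioi (0:ℝ), ((v y z) ^ 2 + (ψ y z) ^ 2)
        = ∫ y in Ioi (0:ℝ), D2 (y, z) := rfl
    rw [hy1, hy2]
    have hsplit : Fd z = (∫ y in Ioi (0:ℝ), (1 / 2) * D1 (y, z))
        + ∫ y in Ioi (0:ℝ), D2 (y, z) := by
      rw [hFddef]
      exact integral_add ((hIntD1 z hz').const_mul _) (hIntD2 z hz')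
    rw [hsplit, integral_const_mul]
  constructor
  · rw [hcongrz]
    exact hmain
  · rw [show (∫ y in Ioi (0:ℝ), v y H * ψ y H) = E H from rfl, hmain]
    linarith
end
end
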